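/- arXiv:math/0009236 — 3 statements merged into one kernel-verified Lean document; each statement's English description precedes it below -/
import Mathlib

section
/- With coface operators ∂⁰f(a_0,…,a_n)(g) = f(a_0 a_1, a_2,…,a_n)(g), ∂ⁿf(a_0,…,a_n)(g) = f((S⁻¹(g⁽⁰⁾)·a_n)a_0, a_1,…,a_{n−1})(g⁽¹⁾), and the cyclic operator T_n as above, one has T_n ∂⁰ = ∂ⁿ on C_H^{n−1}(A). -/
universe u

open Finset in
/-- A Hopf algebra over `k` presented in pointwise (Sweedler) form: for every
`h : H`, the comultiplication is `Δ h = ∑ i < len h, Δ₁ h i ⊗ Δ₂ h i`.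
Coalgebra identities that live in tensor powers of `H` are expressed in the
equivalent "separating" form, i.e. after applying an arbitrary multilinear map
with values in an arbitrary `k`-module. -/
structure SweedlerHopf (k : Type u) (H : Type u) [Field k] [Ring H] [Algebra k H] where
  len : H → ℕ
  Δ₁ : H → ℕ → H
  Δ₂ : H → ℕ → H
  ε : H →ₐ[k] k
  S : H →ₗ[k] H
  Sinv : H →ₗ[k] H
  S_Sinv : ∀ h, S (Sinv h) = h
  Sinv_S : ∀ h, Sinv (S h) = h
  counit_left : ∀ h : H, (∑ i ∈ range (len h), ε (Δ₁ h i) • Δ₂ h i) = h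
  counit_right : ∀ h : H, (∑ i ∈ range (len h), ε (Δ₂ h i) • Δ₁ h i) = h
  coassoc : ∀ (M : Type u) [AddCommGroup M] [Module k M]
      (φ : H →ₗ[k] H →ₗ[k] H →ₗ[k] M) (h : H),
      (∑ i ∈ range (len h), ∑ j ∈ range (len (Δ₁ h i)),
        φ (Δ₁ (Δ₁ h i) j) (Δ₂ (Δ₁ h i) j) (Δ₂ h i))
      = ∑ i ∈ range (len h), ∑ j ∈ range (len (Δ₂ h i)),
        φ (Δ₁ h i) (Δ₁ (Δ₂ h i) j) (Δ₂ (Δ₂ h i) j)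
  comul_mul : ∀ (M : Type u) [AddCommGroup M] [Module k M]
      (φ : H →ₗ[k] H →ₗ[k] M) (g h : H),
      (∑ i ∈ range (len (g * h)), φ (Δ₁ (g * h) i) (Δ₂ (g * h) i))
      = ∑ i ∈ range (len g), ∑ j ∈ range (len h),
          φ (Δ₁ g i * Δ₁ h j) (Δ₂ g i * Δ₂ h j)
  comul_one : ∀ (M : Type u) [AddCommGroup M] [Module k M]
      (φ : H →ₗ[k] H →ₗ[k] M),
      (∑ i ∈ range (len 1), φ (Δ₁ 1 i) (Δ₂ 1 i)) = φ 1 1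
  antipode_left : ∀ h : H, (∑ i ∈ range (len h), S (Δ₁ h i) * Δ₂ h i) = ε h • 1
  antipode_right : ∀ h : H, (∑ i ∈ range (len h), Δ₁ h i * S (Δ₂ h i)) = ε h • 1
  S_mul : ∀ g h : H, S (g * h) = S h * S g
  S_one : S 1 = 1
  comul_S : ∀ (M : Type u) [AddCommGroup M] [Module k M]
      (φ : H →ₗ[k] H →ₗ[k] M) (g : H),
      (∑ i ∈ range (len (S g)), φ (Δ₁ (S g) i) (Δ₂ (S g) i))
      = ∑ i ∈ range (len g), φ (S (Δ₂ g i)) (S (Δ₁ g i))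
  comul_Sinv : ∀ (M : Type u) [AddCommGroup M] [Module k M]
      (φ : H →ₗ[k] H →ₗ[k] M) (g : H),
      (∑ i ∈ range (len (Sinv g)), φ (Δ₁ (Sinv g) i) (Δ₂ (Sinv g) i))
      = ∑ i ∈ range (len g), φ (Sinv (Δ₂ g i)) (Sinv (Δ₁ g i))

open Finset in
/-- A left `H`-module algebra (`H`-algebra) over the Sweedler-presented Hopf
algebra `𝓗`: `h ⬝ (a b) = ∑ (h⁽⁰⁾ ⬝ a)(h⁽¹⁾ ⬝ b)` and `h ⬝ 1 = ε(h) 1`. -/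
structure SweedlerMA {k H : Type u} [Field k] [Ring H] [Algebra k H]
    (𝓗 : SweedlerHopf k H) (A : Type u) [Ring A] [Algebra k A] where
  act : H →ₗ[k] A →ₗ[k] A
  act_mul : ∀ (g h : H) (a : A), act (g * h) a = act g (act h a)
  act_one : ∀ a : A, act 1 a = a
  act_mul_distrib : ∀ (h : H) (a b : A),
      act h (a * b) = ∑ i ∈ range (𝓗.len h), act (𝓗.Δ₁ h i) a * act (𝓗.Δ₂ h i) b
  act_unit : ∀ h : H, act h 1 = 𝓗.ε h • 1

open Finset in
/-- Iterated Sweedler expansion: `Sexpand 𝓗 n h ψ` is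
`∑ ψ (h⁽⁰⁾, h⁽¹⁾, …, h⁽ⁿ⁾)` over the components of `Δ⁽ⁿ⁾ h`. -/
def Sexpand {k H : Type u} [Field k] [Ring H] [Algebra k H]
    (𝓗 : SweedlerHopf k H) {M : Type u} [AddCommMonoid M] :
    (n : ℕ) → H → ((Fin (n + 1) → H) → M) → M
  | 0, h, ψ => ψ (fun _ => h)
  | n + 1, h, ψ => ∑ i ∈ range (𝓗.len h),
      Sexpand 𝓗 n (𝓗.Δ₂ h i) (fun v => ψ (Fin.cons (𝓗.Δ₁ h i) v))

open Finset in
/-- `F : A^{⊗(n+1)} → F(H)` is an `H`-equivariant cochain: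
`(h ⬝ F)(a₀,…,aₙ)(g) = F(a₀,…,aₙ)(S(h⁽¹⁾) g h⁽⁰⁾)`, where
`(h ⬝ F)(a₀,…,aₙ)(g) = F(h⁽⁰⁾ ⬝ a₀,…,h⁽ⁿ⁾ ⬝ aₙ)(g)`. -/
def IsEquivCochain {k H A : Type u} [Field k] [Ring H] [Algebra k H]
    [Ring A] [Algebra k A] (𝓗 : SweedlerHopf k H) (MA : SweedlerMA 𝓗 A)
    (n : ℕ) (F : (Fin (n + 1) → A) → H → k) : Prop :=
  ∀ (h g : H) (a : Fin (n + 1) → A),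
    Sexpand 𝓗 n h (fun v => F (fun i => MA.act (v i) (a i)) g)
      = ∑ i ∈ range (𝓗.len h), F a (𝓗.S (𝓗.Δ₂ h i) * g * 𝓗.Δ₁ h i)

open Finset in
/-- The cyclic operator `Tₙ F (a₀,…,aₙ)(g) = F (S⁻¹(g⁽⁰⁾) ⬝ aₙ, a₀,…,aₙ₋₁)(g⁽¹⁾)`. -/
def cyclicT {k H A : Type u} [Field k] [Ring H] [Algebra k H]
    [Ring A] [Algebra k A] (𝓗 : SweedlerHopf k H) (MA : SweedlerMA 𝓗 A)
    (n : ℕ) (F : (Fin (n + 1) → A) → H → k) : (Fin (n + 1) → A) → H → k :=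
  fun a g => ∑ i ∈ range (𝓗.len g),
    F (Fin.cons (MA.act (𝓗.Sinv (𝓗.Δ₁ g i)) (a (Fin.last n)))
        (fun j : Fin n => a j.castSucc)) (𝓗.Δ₂ g i)

/-- The zeroth coface operator `∂⁰ : C^m → C^{m+1}`,
`∂⁰F(a₀,…,a_{m+1})(g) = F(a₀a₁, a₂,…,a_{m+1})(g)`. -/
def coface0 {k H A : Type u} [Field k] [Ring H] [Algebra k H]
    [Ring A] [Algebra k A] (m : ℕ) (F : (Fin (m + 1) → A) → H → k) :
    (Fin (m + 2) → A) → H → k :=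
  fun a g => F (Fin.cons (a 0 * a 1) (fun j : Fin m => a j.succ.succ)) g

open Finset in
/-- The last coface operator `∂^{m+1} : C^m → C^{m+1}`,
`∂^{m+1}F(a₀,…,a_{m+1})(g) = F((S⁻¹(g⁽⁰⁾) ⬝ a_{m+1}) a₀, a₁,…,a_m)(g⁽¹⁾)`. -/
def cofaceLast {k H A : Type u} [Field k] [Ring H] [Algebra k H]
    [Ring A] [Algebra k A] (𝓗 : SweedlerHopf k H) (MA : SweedlerMA 𝓗 A)
    (m : ℕ) (F : (Fin (m + 1) → A) → H → k) : (Fin (m + 2) → A) → H → k :=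
  fun a g => ∑ i ∈ range (𝓗.len g),
    F (Fin.cons (MA.act (𝓗.Sinv (𝓗.Δ₁ g i)) (a (Fin.last (m + 1))) * a 0)
        (fun j : Fin m => a j.succ.castSucc)) (𝓗.Δ₂ g i)

theorem cyclicT_coface0_eq_cofaceLast {k H A : Type u} [Field k] [Ring H] [Algebra k H]
    [Ring A] [Algebra k A] (𝓗 : SweedlerHopf k H) (MA : SweedlerMA 𝓗 A) (m : ℕ)
    (F : (Fin (m + 1) → A) → H → k) :
    cyclicT 𝓗 MA (m + 1) (coface0 m F) = cofaceLast 𝓗 MA m F :=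
  rfl

theorem cyclicT_coface0_general {k H A : Type u} [Field k]
    [Ring H] [Algebra k H] [Ring A] [Algebra k A]
    (𝓗 : SweedlerHopf k H) (MA : SweedlerMA 𝓗 A) (m : ℕ)
    (f : MultilinearMap k (fun _ : Fin (m + 1) => A) (H →ₗ[k] k)) :
    ∀ (a : Fin (m + 2) → A) (g : H),
      cyclicT 𝓗 MA (m + 1) (coface0 m (fun a g => f a g)) a g
        = cofaceLast 𝓗 MA m (fun a g => f a g) a g := by
  intro a g
  rw [cyclicT_coface0_eq_cofaceLast]

/-- On `C_H^{m}(A)` (i.e. `C_H^{n-1}` with `n = m+1`) one has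
`Tₙ ∂⁰ = ∂ⁿ`. -/
theorem cyclicT_coface0 {k H A : Type u} [Field k] [CharZero k]
    [Ring H] [Algebra k H] [Ring A] [Algebra k A]
    (𝓗 : SweedlerHopf k H) (MA : SweedlerMA 𝓗 A) (m : ℕ)
    (f : MultilinearMap k (fun _ : Fin (m + 1) => A) (H →ₗ[k] k))
    (hf : IsEquivCochain 𝓗 MA m (fun a g => f a g)) :
    ∀ (a : Fin (m + 2) → A) (g : H),
      cyclicT 𝓗 MA (m + 1) (coface0 m (fun a g => f a g)) a g
        = cofaceLast 𝓗 MA m (fun a g => f a g) a g :=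
  cyclicT_coface0_general 𝓗 MA m f
end

section
/- Under the isomorphism β(a ⊗ u) = a₍₀₎ ⊗ a₍₁₎u, the generalized trace map Ψⁿf(a_0⊗u_0,…,a_n⊗u_n)(g) = f(a_{0〈0〉},…,a_{n〈0〉})(g⁽¹⁾)·tr(S(a_{0〈1〉})u_0 S(a_{1〈1〉})u_1 ⋯ S(a_{n〈1〉})u_n g⁽⁰⁾) transforms to the simple trace map: (Ψⁿ ∘ β^{⊗(n+1)})f(a_0⊗u_0,…,a_n⊗u_n)(g) = f(a_0,…,a_n)(g⁽¹⁾)·tr(u_0 u_1 ⋯ u_n g⁽⁰⁾). -/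
universe u

open Finset in
/-- A Yetter-Drinfeld `H`-algebra: a left `H`-module algebra which is a right
`H^{op}`-comodule algebra (coaction presented pointwise as
`ρ a = ∑ j < ρlen a, ρA a j ⊗ ρH a j`) satisfying the Yetter-Drinfeld
compatibility condition. -/
structure SweedlerYD {k H : Type u} [Field k] [Ring H] [Algebra k H]
    (𝓗 : SweedlerHopf k H) (A : Type u) [Ring A] [Algebra k A]
    extends SweedlerMA 𝓗 A where
  ρlen : A → ℕ
  ρA : A → ℕ → A
  ρH : A → ℕ → H
  ρ_counit : ∀ a : A, (∑ j ∈ range (ρlen a), 𝓗.ε (ρH a j) • ρA a j) = a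
  ρ_coassoc : ∀ (M : Type u) [AddCommGroup M] [Module k M]
      (φ : A →ₗ[k] H →ₗ[k] H →ₗ[k] M) (a : A),
      (∑ j ∈ range (ρlen a), ∑ l ∈ range (ρlen (ρA a j)),
        φ (ρA (ρA a j) l) (ρH (ρA a j) l) (ρH a j))
      = ∑ j ∈ range (ρlen a), ∑ l ∈ range (𝓗.len (ρH a j)),
          φ (ρA a j) (𝓗.Δ₁ (ρH a j) l) (𝓗.Δ₂ (ρH a j) l)
  ρ_mul : ∀ (M : Type u) [AddCommGroup M] [Module k M]
      (φ : A →ₗ[k] H →ₗ[k] M) (a b : A),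
      (∑ j ∈ range (ρlen (a * b)), φ (ρA (a * b) j) (ρH (a * b) j))
      = ∑ j ∈ range (ρlen a), ∑ l ∈ range (ρlen b),
          φ (ρA a j * ρA b l) (ρH b l * ρH a j)
  ρ_one : ∀ (M : Type u) [AddCommGroup M] [Module k M]
      (φ : A →ₗ[k] H →ₗ[k] M),
      (∑ j ∈ range (ρlen (1 : A)), φ (ρA 1 j) (ρH 1 j)) = φ 1 1
  yd : ∀ (M : Type u) [AddCommGroup M] [Module k M]
      (φ : A →ₗ[k] H →ₗ[k] M) (h : H) (a : A),
      (∑ i ∈ range (𝓗.len h), ∑ j ∈ range (ρlen (act (𝓗.Δ₂ h i) a)),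
        φ (ρA (act (𝓗.Δ₂ h i) a) j) (ρH (act (𝓗.Δ₂ h i) a) j * 𝓗.Δ₁ h i))
      = ∑ i ∈ range (𝓗.len h), ∑ j ∈ range (ρlen a),
          φ (act (𝓗.Δ₁ h i) (ρA a j)) (𝓗.Δ₂ h i * ρH a j)

open Finset in
/-- Simultaneous Sweedler expansion of the coaction on a tuple of elements of
the Yetter-Drinfeld algebra `A`:
`coexpand Y n a ψ = ∑ ψ ((a₀)₍₀₎,…) ((a₀)₍₁₎,…)` over all coaction components. -/
def coexpand {k H A : Type u} [Field k] [Ring H] [Algebra k H]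
    [Ring A] [Algebra k A] {𝓗 : SweedlerHopf k H} (Y : SweedlerYD 𝓗 A)
    {M : Type u} [AddCommMonoid M] :
    (n : ℕ) → (Fin n → A) → ((Fin n → A) → (Fin n → H) → M) → M
  | 0, _, ψ => ψ Fin.elim0 Fin.elim0
  | n + 1, a, ψ => ∑ j ∈ range (Y.ρlen (a 0)),
      coexpand Y n (fun i => a i.succ)
        (fun as hs => ψ (Fin.cons (Y.ρA (a 0) j) as) (Fin.cons (Y.ρH (a 0) j) hs))

open Finset in
/-- The generalized (equivariant) trace map `Ψⁿ` of Proposition 5.2: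
`Ψⁿf(a₀⊗u₀,…,aₙ⊗uₙ)(g) = f(a₀₍₀₎,…,aₙ₍₀₎)(g⁽¹⁾) ·
  tr(S(a₀₍₁₎)u₀ S(a₁₍₁₎)u₁ ⋯ S(aₙ₍₁₎)uₙ g⁽⁰⁾)`. -/
noncomputable def PsiMap {k H A V : Type u} [Field k] [Ring H] [Algebra k H]
    [Ring A] [Algebra k A] [AddCommGroup V] [Module k V]
    (𝓗 : SweedlerHopf k H) (Y : SweedlerYD 𝓗 A)
    (r : H →ₐ[k] Module.End k V) (n : ℕ)
    (f : MultilinearMap k (fun _ : Fin (n + 1) => A) (H →ₗ[k] k))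
    (a : Fin (n + 1) → A) (u : Fin (n + 1) → Module.End k V) (g : H) : k :=
  ∑ i ∈ range (𝓗.len g), coexpand Y (n + 1) a (fun as hs =>
    f as (𝓗.Δ₂ g i) *
      LinearMap.trace k V
        ((List.ofFn (fun l : Fin (n + 1) => r (𝓗.S (hs l)) * u l)).prod * r (𝓗.Δ₁ g i)))

/-!
After `β`, the integrand of `Ψⁿ` is `F(a₍₀₎₍₀₎, S(a₍₀₎₍₁₎) a₍₁₎)` for a map `F` that is multilinear
both in the `A`-arguments and in the `H`-arguments (`r` is multiplicative, so
`r(S x) (r y u) = r(S x · y) u`). Coassociativity of the coaction rewrites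
`a₍₀₎₍₀₎ ⊗ S(a₍₀₎₍₁₎) a₍₁₎` as `a₍₀₎ ⊗ S(a₍₁₎) a₍₂₎`, which is `a ⊗ 1` by the antipode and counit
axioms; multilinearity lets this collapse one tensor factor at a time.
-/

open Finset

namespace MultilinearMap

variable {R A H M : Type*} [CommSemiring R] [AddCommMonoid A] [Module R A]
  [AddCommMonoid H] [Module R H] [AddCommMonoid M] [Module R M] {n : ℕ}
  (F : MultilinearMap R (fun _ : Fin (n + 1) => A) (MultilinearMap R (fun _ : Fin (n + 1) => H) M))

def curryLeft₂ (b : A) (h : H) :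
    MultilinearMap R (fun _ : Fin n => A) (MultilinearMap R (fun _ : Fin n => H) M) :=
  (LinearMap.applyₗ h ∘ₗ (multilinearCurryLeftEquiv R (fun _ => H) M).toLinearMap)
    |>.compMultilinearMap (F.curryLeft b)

@[simp]
theorem curryLeft₂_apply (b : A) (h : H) (t : Fin n → A) (s : Fin n → H) :
    F.curryLeft₂ b h t s = F (Fin.cons b t) (Fin.cons h s) :=
  rfl

def consBilin (t : Fin n → A) (s : Fin n → H) : A →ₗ[R] H →ₗ[R] M :=
  LinearMap.mk₂ R (fun b h => F (Fin.cons b t) (Fin.cons h s))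
    (fun b b' h => by simp [cons_add])
    (fun c b h => by simp [cons_smul])
    (fun b h h' => (F (Fin.cons b t)).cons_add s h h')
    (fun c b h => (F (Fin.cons b t)).cons_smul s c h)

@[simp]
theorem consBilin_apply (t : Fin n → A) (s : Fin n → H) (b : A) (h : H) :
    F.consBilin t s b h = F (Fin.cons b t) (Fin.cons h s) :=
  rfl

end MultilinearMap

section Trace

variable {k H V : Type*} [CommRing k] [Ring H] [Algebra k H] [AddCommGroup V] [Module k V]
  {m : ℕ}

noncomputable def traceMultilinear (r : H →ₐ[k] Module.End k V) (u : Fin m → Module.End k V)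
    (w : H) : MultilinearMap k (fun _ : Fin m => H) k :=
  (LinearMap.trace k V ∘ₗ LinearMap.mulRight k (r w)).compMultilinearMap
    ((MultilinearMap.mkPiAlgebraFin k m (Module.End k V)).compLinearMap
      fun l => LinearMap.mulRight k (u l) ∘ₗ r.toLinearMap)

@[simp]
theorem traceMultilinear_apply (r : H →ₐ[k] Module.End k V) (u : Fin m → Module.End k V)
    (w : H) (hs : Fin m → H) :
    traceMultilinear r u w hs =
      LinearMap.trace k V ((List.ofFn fun l => r (hs l) * u l).prod * r w) :=
  rfl

end Trace

section Sweedler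

variable {k H A : Type u} [Field k] [Ring H] [Algebra k H] [Ring A] [Algebra k A]
  {𝓗 : SweedlerHopf k H} (Y : SweedlerYD 𝓗 A)

theorem coexpand_sum {M : Type u} [AddCommMonoid M] {ι : Type*} (s : Finset ι) :
    ∀ (n : ℕ) (a : Fin n → A) (ψ : ι → (Fin n → A) → (Fin n → H) → M),
      coexpand Y n a (fun as hs => ∑ i ∈ s, ψ i as hs) = ∑ i ∈ s, coexpand Y n a (ψ i)
  | 0, _, _ => rfl
  | n + 1, a, ψ => by
    simp only [coexpand]
    rw [sum_comm]
    exact sum_congr rfl fun j _ => coexpand_sum s n _ _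

theorem SweedlerYD.ρ_antipode_left {M : Type u} [AddCommGroup M] [Module k M]
    (Φ : A →ₗ[k] H →ₗ[k] M) (a : A) :
    ∑ j ∈ range (Y.ρlen a), ∑ l ∈ range (Y.ρlen (Y.ρA a j)),
      Φ (Y.ρA (Y.ρA a j) l) (𝓗.S (Y.ρH (Y.ρA a j) l) * Y.ρH a j) = Φ a 1 := by
  let mulS : H →ₗ[k] H →ₗ[k] H := LinearMap.mul k H ∘ₗ 𝓗.S
  -- applied to the trilinear map `b x y ↦ Φ b (S x * y)`
  have coassoc :=
    Y.ρ_coassoc M (LinearMap.lcomp k (H →ₗ[k] M) mulS ∘ₗ LinearMap.llcomp k H H M ∘ₗ Φ) a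
  simp only [LinearMap.coe_comp, Function.comp_apply, LinearMap.lcomp_apply,
    LinearMap.llcomp_apply, LinearMap.mul_apply_apply, mulS] at coassoc
  rw [coassoc]
  calc _ = ∑ j ∈ range (Y.ρlen a), Φ (𝓗.ε (Y.ρH a j) • Y.ρA a j) 1 :=
        sum_congr rfl fun j _ => by
          rw [← map_sum, 𝓗.antipode_left, map_smul, map_smul, LinearMap.smul_apply]
    _ = Φ a 1 := by rw [← LinearMap.sum_apply, ← map_sum, Y.ρ_counit]

theorem coexpand_antipode_left {M : Type u} [AddCommGroup M] [Module k M] : ∀ (n : ℕ)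
    (F : MultilinearMap k (fun _ : Fin n => A) (MultilinearMap k (fun _ : Fin n => H) M))
    (a : Fin n → A),
    coexpand Y n a (fun as hs => coexpand Y n as fun as' hs' =>
      F as' fun l => 𝓗.S (hs' l) * hs l) = F a fun _ => 1
  | 0, F, a => by
    simp only [coexpand]
    congr <;> funext l <;> exact l.elim0
  | n + 1, F, a => by
    have cons_S_mul (x y : H) (hs' hs : Fin n → H) :
        (fun l => 𝓗.S ((Fin.cons x hs' : Fin (n + 1) → H) l) *
            (Fin.cons y hs : Fin (n + 1) → H) l) =
          Fin.cons (𝓗.S x * y) fun l => 𝓗.S (hs' l) * hs l := by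
      ext l
      cases l using Fin.cases <;> rfl
    calc _ = ∑ j ∈ range (Y.ρlen (a 0)), ∑ l ∈ range (Y.ρlen (Y.ρA (a 0) j)),
          F.consBilin (Fin.tail a) 1 (Y.ρA (Y.ρA (a 0) j) l)
            (𝓗.S (Y.ρH (Y.ρA (a 0) j) l) * Y.ρH (a 0) j) := by
          simp only [coexpand, Fin.cons_zero, Fin.cons_succ, coexpand_sum, cons_S_mul]
          refine sum_congr rfl fun j _ => sum_congr rfl fun l _ => ?_
          exact coexpand_antipode_left n (F.curryLeft₂ _ _) (Fin.tail a)
      _ = F.consBilin (Fin.tail a) 1 (a 0) 1 := Y.ρ_antipode_left _ _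
      _ = F a fun _ => 1 := by
        rw [MultilinearMap.consBilin_apply, Fin.cons_self_tail]
        exact congrArg (F a) (Fin.cons_self_tail fun _ => (1 : H))

end Sweedler

open Finset in
theorem psi_beta_eq_simple_trace_general {k H A V : Type u} [Field k]
    [Ring H] [Algebra k H] [Ring A] [Algebra k A]
    [AddCommGroup V] [Module k V]
    (𝓗 : SweedlerHopf k H) (Y : SweedlerYD 𝓗 A)
    (r : H →ₐ[k] Module.End k V) (n : ℕ)
    (f : MultilinearMap k (fun _ : Fin (n + 1) => A) (H →ₗ[k] k))
    (a : Fin (n + 1) → A) (u : Fin (n + 1) → Module.End k V) (g : H) :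
    coexpand Y (n + 1) a
      (fun as hs => PsiMap 𝓗 Y r n f as (fun l => r (hs l) * u l) g)
    = ∑ i ∈ range (𝓗.len g),
        f a (𝓗.Δ₂ g i) *
          LinearMap.trace k V ((List.ofFn u).prod * r (𝓗.Δ₁ g i)) := by
  let F (i : ℕ) := ((LinearMap.applyₗ (𝓗.Δ₂ g i)).compMultilinearMap f).smulRight
    (traceMultilinear r u (𝓗.Δ₁ g i))
  have integrand (as : Fin (n + 1) → A) (hs : Fin (n + 1) → H) :
      PsiMap 𝓗 Y r n f as (fun l => r (hs l) * u l) g =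
        ∑ i ∈ range (𝓗.len g), coexpand Y (n + 1) as fun as' hs' =>
          F i as' fun l => 𝓗.S (hs' l) * hs l := by
    simp [PsiMap, F, mul_assoc]
  simp_rw [integrand, coexpand_sum, coexpand_antipode_left]
  simp [F]

open Finset in
/-- Under the isomorphism `β(a ⊗ u) = a₍₀₎ ⊗ a₍₁₎ u`, the
generalized trace map `Ψⁿ` transforms to the simple trace map:
`(Ψⁿ ∘ β^{⊗(n+1)}) f (a₀⊗u₀,…,aₙ⊗uₙ)(g) = f(a₀,…,aₙ)(g⁽¹⁾) · tr(u₀ ⋯ uₙ g⁽⁰⁾)`. -/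
theorem psi_beta_eq_simple_trace {k H A V : Type u} [Field k] [CharZero k]
    [Ring H] [Algebra k H] [Ring A] [Algebra k A]
    [AddCommGroup V] [Module k V] [FiniteDimensional k V]
    (𝓗 : SweedlerHopf k H) (Y : SweedlerYD 𝓗 A)
    (r : H →ₐ[k] Module.End k V) (n : ℕ)
    (f : MultilinearMap k (fun _ : Fin (n + 1) => A) (H →ₗ[k] k))
    (a : Fin (n + 1) → A) (u : Fin (n + 1) → Module.End k V) (g : H) :
    coexpand Y (n + 1) a
      (fun as hs => PsiMap 𝓗 Y r n f as (fun l => r (hs l) * u l) g)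
    = ∑ i ∈ range (𝓗.len g),
        f a (𝓗.Δ₂ g i) *
          LinearMap.trace k V ((List.ofFn u).prod * r (𝓗.Δ₁ g i)) :=
  psi_beta_eq_simple_trace_general 𝓗 Y r n f a u g
end

section
/- The quantum monopole projector e_q = (1/2)[[1 + q⁻²b, qa],[q⁻¹a*, 1 − b]] ∈ M₂(S²_q) is an idempotent: e_q² = e_q. -/
noncomputable section

/-- The defining relations of the Podleś equator quantum sphere `S²_q`:
the free `ℂ`-algebra on generators `a` (index `0`), `a*` (index `1`) and `b`
(index `2`), subject to `a a* + q⁻⁴ b² = 1`, `a* a + b² = 1`, `a b = q⁻² b a`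
and `a* b = q² b a*`. -/
inductive PodlesRel (q : ℂ) :
    FreeAlgebra ℂ (Fin 3) → FreeAlgebra ℂ (Fin 3) → Prop
  | rel1 : PodlesRel q
      (FreeAlgebra.ι ℂ (0 : Fin 3) * FreeAlgebra.ι ℂ (1 : Fin 3)
        + (q ^ 4)⁻¹ • (FreeAlgebra.ι ℂ (2 : Fin 3) * FreeAlgebra.ι ℂ (2 : Fin 3))) 1
  | rel2 : PodlesRel q
      (FreeAlgebra.ι ℂ (1 : Fin 3) * FreeAlgebra.ι ℂ (0 : Fin 3)
        + FreeAlgebra.ι ℂ (2 : Fin 3) * FreeAlgebra.ι ℂ (2 : Fin 3)) 1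
  | rel3 : PodlesRel q
      (FreeAlgebra.ι ℂ (0 : Fin 3) * FreeAlgebra.ι ℂ (2 : Fin 3))
      ((q ^ 2)⁻¹ • (FreeAlgebra.ι ℂ (2 : Fin 3) * FreeAlgebra.ι ℂ (0 : Fin 3)))
  | rel4 : PodlesRel q
      (FreeAlgebra.ι ℂ (1 : Fin 3) * FreeAlgebra.ι ℂ (2 : Fin 3))
      ((q ^ 2) • (FreeAlgebra.ι ℂ (2 : Fin 3) * FreeAlgebra.ι ℂ (1 : Fin 3)))

/-- The Podleś equator quantum sphere `S²_q`. -/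
abbrev PodlesSphere (q : ℂ) := RingQuot (PodlesRel q)

/-- The generator `a` of `S²_q`. -/
def pa (q : ℂ) : PodlesSphere q :=
  RingQuot.mkAlgHom ℂ (PodlesRel q) (FreeAlgebra.ι ℂ (0 : Fin 3))

/-- The generator `a*` of `S²_q`. -/
def pastar (q : ℂ) : PodlesSphere q :=
  RingQuot.mkAlgHom ℂ (PodlesRel q) (FreeAlgebra.ι ℂ (1 : Fin 3))

/-- The generator `b` of `S²_q`. -/
def pb (q : ℂ) : PodlesSphere q :=
  RingQuot.mkAlgHom ℂ (PodlesRel q) (FreeAlgebra.ι ℂ (2 : Fin 3))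

/-- The quantum monopole projector
`e_q = (1/2) [[1 + q⁻² b, q a], [q⁻¹ a*, 1 - b]] ∈ M₂(S²_q)`. -/
def monopole (q : ℂ) : Matrix (Fin 2) (Fin 2) (PodlesSphere q) :=
  !![(2 : ℂ)⁻¹ • (1 + (q ^ 2)⁻¹ • pb q), (2 : ℂ)⁻¹ • (q • pa q);
     (2 : ℂ)⁻¹ • (q⁻¹ • pastar q), (2 : ℂ)⁻¹ • (1 - pb q)]

end

/-!
Write `e_q = ½ (1 + X)` with `X = [[q⁻²b, qa], [q⁻¹a*, -b]]`. Since `½ (1 + X)` is idempotent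
exactly when `X² = 1`, it suffices to compute `X²`: its diagonal entries are `1` by the two
quadratic relations of `S²_q`, and its off-diagonal entries vanish by the two commutation
relations between `a`, `a*` and `b`.
-/

theorem isIdempotentElem_inv_two_smul_one_add {K R : Type*} [Field K] [NeZero (2 : K)] [Ring R]
    [Algebra K R] {x : R} (hx : x * x = 1) : IsIdempotentElem ((2 : K)⁻¹ • (1 + x)) := by
  have hsq : (1 + x) * (1 + x) = (2 : K) • (1 + x) := by
    rw [two_smul, mul_add, mul_one, add_mul, one_mul, hx]; abel
  rw [IsIdempotentElem, smul_mul_smul, hsq, smul_smul, mul_assoc, inv_mul_cancel₀ two_ne_zero,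
    mul_one]

section MonopoleReflection

variable {K A : Type*} [Field K] [Ring A] [Algebra K A]

def monopoleReflection (q : K) (a a' b : A) : Matrix (Fin 2) (Fin 2) A :=
  !![(q ^ 2)⁻¹ • b, q • a; q⁻¹ • a', -b]

theorem monopoleReflection_mul_self {q : K} (hq : q ≠ 0) {a a' b : A}
    (h₁ : a * a' + (q ^ 4)⁻¹ • (b * b) = 1) (h₂ : a' * a + b * b = 1)
    (h₃ : a * b = (q ^ 2)⁻¹ • (b * a)) (h₄ : a' * b = q ^ 2 • (b * a')) :
    monopoleReflection q a a' b * monopoleReflection q a a' b = 1 := by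
  have hq₄ : (q ^ 2)⁻¹ * (q ^ 2)⁻¹ = (q ^ 4)⁻¹ := by rw [← mul_inv, ← pow_add]
  have hq₁ : (q ^ 2)⁻¹ * (q⁻¹ * q ^ 2) = q⁻¹ := by field_simp
  rw [monopoleReflection, Matrix.mul_fin_two, Matrix.one_fin_two]
  simp only [smul_mul_assoc, mul_smul_comm, neg_mul, mul_neg, neg_neg, h₃, h₄, smul_smul, hq₄,
    hq₁, inv_mul_cancel₀ hq, mul_inv_cancel₀ hq, one_smul, smul_neg, add_neg_cancel,
    add_comm _ (a * a'), h₁, h₂]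

end MonopoleReflection

theorem pa_mul_pastar_add_smul_pb_mul_pb (q : ℂ) :
    pa q * pastar q + (q ^ 4)⁻¹ • (pb q * pb q) = 1 := by
  simpa [pa, pastar, pb] using RingQuot.mkAlgHom_rel ℂ (PodlesRel.rel1 (q := q))

theorem pastar_mul_pa_add_pb_mul_pb (q : ℂ) : pastar q * pa q + pb q * pb q = 1 := by
  simpa [pa, pastar, pb] using RingQuot.mkAlgHom_rel ℂ (PodlesRel.rel2 (q := q))

theorem pa_mul_pb (q : ℂ) : pa q * pb q = (q ^ 2)⁻¹ • (pb q * pa q) := by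
  simpa [pa, pb] using RingQuot.mkAlgHom_rel ℂ (PodlesRel.rel3 (q := q))

theorem pastar_mul_pb (q : ℂ) : pastar q * pb q = q ^ 2 • (pb q * pastar q) := by
  simpa [pastar, pb] using RingQuot.mkAlgHom_rel ℂ (PodlesRel.rel4 (q := q))

theorem monopole_eq_inv_two_smul_one_add (q : ℂ) :
    monopole q = (2 : ℂ)⁻¹ • (1 + monopoleReflection q (pa q) (pastar q) (pb q)) := by
  simp [monopole, monopoleReflection, Matrix.one_fin_two, sub_eq_add_neg]

/-- The quantum monopole projector
`e_q = (1/2)[[1 + q⁻²b, qa],[q⁻¹a*, 1 − b]] ∈ M₂(S²_q)` is an idempotent. -/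
theorem monopole_idempotent (q : ℂ) (hq : q ≠ 0) :
    monopole q * monopole q = monopole q := by
  rw [monopole_eq_inv_two_smul_one_add]
  exact isIdempotentElem_inv_two_smul_one_add <| monopoleReflection_mul_self hq
    (pa_mul_pastar_add_smul_pb_mul_pb q) (pastar_mul_pa_add_pb_mul_pb q) (pa_mul_pb q)
    (pastar_mul_pb q)
end
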